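/- Let λ ∈ ℓ¹(ℤ) satisfy λ_k ≥ c ω^{−|k|} for some c > 0, ω > 1 and all k ∈ ℤ. Then e_n(H_λ)² ≥ (c/2) · min{ 1, ω^{−4n}/(4n(1−ω^{−1})) }. -/

import Mathlib

/-- The reproducing kernel `K_λ(x,y) = ∑_k λ_k e^{2πik(x-y)}` of the univariate space `H_λ`. -/
noncomputable def Klam1 (lam : ℤ → ℝ) (x y : ℝ) : ℂ :=
  ∑' k : ℤ, (lam k : ℂ) * Complex.exp (2 * Real.pi * Complex.I * (((k : ℝ) * (x - y) : ℝ) : ℂ))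

/-- Squared worst-case error of the quadrature rule with nodes `x` and weights `a` for
`∫₀¹ f dx` on `H_λ`:
`e(Q)² = λ₀ - 2 λ₀ Re(∑ aₖ) + ∑_{j,k} conj(a_j) a_k K_λ(x_j, x_k)`. -/
noncomputable def quadErr2₁ (lam : ℤ → ℝ) {n : ℕ} (x : Fin n → ℝ) (a : Fin n → ℂ) : ℝ :=
  lam 0 - 2 * lam 0 * (∑ j, a j).re +
    (∑ j, ∑ k, (starRingEnd ℂ) (a j) * a k * Klam1 lam (x j) (x k)).re

/-- `e_n(H_λ)²`: squared minimal worst-case error among quadrature rules with `n` nodes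
for `∫₀¹ f dx` on the univariate space `H_λ`. -/
noncomputable def en2₁ (lam : ℤ → ℝ) (n : ℕ) : ℝ :=
  ⨅ (x : Fin n → ℝ) (a : Fin n → ℂ), quadErr2₁ lam x a

/-!
Write `η_j = e^{-2πi x_j}` and `T(k) = ∑_j a_j η_j^k`. The squared error of the rule is
`∑_k λ_k |δ_{k0} - T(k)|²`; keeping only `k ≥ 0` and using `λ_k ≥ c μ^k` with `μ = ω⁻¹`, it is
at least `c ∑_{m ≥ 0} |δ_{m0} - ∑_j a_j w_j^m|²` where `w_j = √μ η_j`. This is the squared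
Hardy-space distance from `1` to the span of the Szegő kernels `(w_j^m)_m`. The coefficients of
the Blaschke product `B` with zeros `w_j` have `ℓ²`-norm at most `1` and are orthogonal to these
kernels, so pairing with them bounds the distance below by `|B(0)| = ∏_j |w_j| = μ^{n/2}`.
Bernoulli's inequality shows that `c μ^n` dominates the stated bound.
-/

open Finset PowerSeries Complex ComplexConjugate
open scoped Real

lemma norm_sub_mul_sq_add_eq (v a b : ℂ) :
    ‖a - v * b‖ ^ 2 + (1 - ‖v‖ ^ 2) * ‖b‖ ^ 2 = ‖b - conj v * a‖ ^ 2 + (1 - ‖v‖ ^ 2) * ‖a‖ ^ 2 := by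
  simp only [Complex.sq_norm, Complex.normSq_apply, Complex.sub_re, Complex.sub_im, Complex.mul_re,
    Complex.mul_im, Complex.conj_re, Complex.conj_im]
  ring

lemma coeff_succ_X_sub_C_mul (v : ℂ) (G : ℂ⟦X⟧) (m : ℕ) :
    coeff (m + 1) ((X - C v) * G) = coeff m G - v * coeff (m + 1) G := by
  rw [sub_mul, map_sub, coeff_succ_X_mul, coeff_C_mul]

lemma coeff_succ_one_sub_C_mul_X_mul (v : ℂ) (G : ℂ⟦X⟧) (m : ℕ) :
    coeff (m + 1) ((1 - C v * X) * G) = coeff (m + 1) G - v * coeff m G := by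
  rw [sub_mul, one_mul, map_sub, mul_assoc, coeff_C_mul, coeff_succ_X_mul]

/- Multiplication by `(X - v) / (1 - v̄ X)` is an isometry of `H²`: with `G = φ / (1 - v̄ X)` this
compares its image with `φ`, up to a truncation defect. -/
lemma sum_range_norm_sq_coeff_X_sub_C_mul_add_eq (v : ℂ) (G : ℂ⟦X⟧) (M : ℕ) :
    ∑ m ∈ range (M + 1), ‖coeff m ((X - C v) * G)‖ ^ 2 + (1 - ‖v‖ ^ 2) * ‖coeff M G‖ ^ 2 =
      ∑ m ∈ range (M + 1), ‖coeff m ((1 - C (conj v) * X) * G)‖ ^ 2 := by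
  induction M with
  | zero =>
    simp only [zero_add, sum_range_one, coeff_zero_eq_constantCoeff_apply, map_mul, map_sub,
      constantCoeff_X, map_one, constantCoeff_C, norm_mul, norm_neg, zero_sub, one_mul, mul_zero,
      sub_zero]
    ring
  | succ M ih =>
    rw [sum_range_succ, sum_range_succ _ (M + 1), ← ih, coeff_succ_X_sub_C_mul,
      coeff_succ_one_sub_C_mul_X_mul]
    linarith [norm_sub_mul_sq_add_eq v (coeff M G) (coeff (M + 1) G)]

lemma sum_range_norm_sq_coeff_X_sub_C_mul_le {v : ℂ} (hv : ‖v‖ ≤ 1) (G : ℂ⟦X⟧) (M : ℕ) :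
    ∑ m ∈ range M, ‖coeff m ((X - C v) * G)‖ ^ 2 ≤
      ∑ m ∈ range M, ‖coeff m ((1 - C (conj v) * X) * G)‖ ^ 2 := by
  rcases M with _ | M
  · simp
  · rw [← sum_range_norm_sq_coeff_X_sub_C_mul_add_eq]
    exact le_add_of_nonneg_right <|
      mul_nonneg (sub_nonneg.mpr (pow_le_one₀ (norm_nonneg v) hv)) (sq_nonneg _)

lemma one_sub_C_mul_X_mul_mk_pow (a : ℂ) : (1 - C a * X) * PowerSeries.mk (a ^ ·) = 1 := by
  have h := congrArg (rescale a) (mk_one_mul_one_sub_eq_one ℂ)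
  rw [map_mul, map_sub, map_one, rescale_X, rescale_mk, mul_comm] at h
  simpa using h

noncomputable def blaschkeFactor (v : ℂ) : ℂ⟦X⟧ := (X - C v) * PowerSeries.mk (conj v ^ ·)

noncomputable def blaschkeProduct {ι : Type*} (s : Finset ι) (v : ι → ℂ) : ℂ⟦X⟧ :=
  ∏ i ∈ s, blaschkeFactor (v i)

lemma blaschkeProduct_insert {ι : Type*} [DecidableEq ι] {s : Finset ι} {i : ι} (hi : i ∉ s)
    (v : ι → ℂ) : blaschkeProduct (insert i s) v = blaschkeFactor (v i) * blaschkeProduct s v :=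
  prod_insert hi

lemma sum_range_norm_sq_coeff_blaschkeFactor_mul_le {v : ℂ} (hv : ‖v‖ ≤ 1) (φ : ℂ⟦X⟧) (M : ℕ) :
    ∑ m ∈ range M, ‖coeff m (blaschkeFactor v * φ)‖ ^ 2 ≤ ∑ m ∈ range M, ‖coeff m φ‖ ^ 2 := by
  have h := sum_range_norm_sq_coeff_X_sub_C_mul_le hv (PowerSeries.mk (conj v ^ ·) * φ) M
  rwa [← mul_assoc, ← mul_assoc, one_sub_C_mul_X_mul_mk_pow, one_mul] at h

lemma sum_range_norm_sq_coeff_blaschkeProduct_le_one {ι : Type*} {s : Finset ι}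
    {v : ι → ℂ} (hv : ∀ i ∈ s, ‖v i‖ ≤ 1) (M : ℕ) :
    ∑ m ∈ range M, ‖coeff m (blaschkeProduct s v)‖ ^ 2 ≤ 1 := by
  classical
  induction s using Finset.induction_on with
  | empty =>
    calc ∑ m ∈ range M, ‖coeff m (blaschkeProduct ∅ v)‖ ^ 2
        = ∑ m ∈ range M, if m = 0 then 1 else 0 := by
          refine sum_congr rfl fun m _ => ?_
          rw [blaschkeProduct, prod_empty, coeff_one]
          split_ifs <;> simp
      _ ≤ 1 := by rw [sum_ite_eq']; split_ifs <;> norm_num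
  | insert i t hi ih =>
    rw [blaschkeProduct_insert hi]
    exact (sum_range_norm_sq_coeff_blaschkeFactor_mul_le (hv i (mem_insert_self i t)) _ M).trans
      (ih fun j hj => hv j (mem_insert_of_mem hj))

lemma norm_coeff_blaschkeProduct_le_one {ι : Type*} {s : Finset ι} {v : ι → ℂ}
    (hv : ∀ i ∈ s, ‖v i‖ ≤ 1) (m : ℕ) : ‖coeff m (blaschkeProduct s v)‖ ≤ 1 := by
  have h := (single_le_sum (fun k _ => sq_nonneg ‖coeff k (blaschkeProduct s v)‖)
    (self_mem_range_succ m)).trans (sum_range_norm_sq_coeff_blaschkeProduct_le_one hv (m + 1))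
  exact (sq_le_one_iff₀ (norm_nonneg _)).mp h

lemma norm_coeff_blaschkeFactor_le_one {v : ℂ} (hv : ‖v‖ ≤ 1) (m : ℕ) :
    ‖coeff m (blaschkeFactor v)‖ ≤ 1 := by
  simpa [blaschkeProduct] using
    norm_coeff_blaschkeProduct_le_one (s := {()}) (v := fun _ => v) (by simpa using hv) m

lemma summable_norm_coeff_blaschkeProduct_sq {ι : Type*} {s : Finset ι} {v : ι → ℂ}
    (hv : ∀ i ∈ s, ‖v i‖ ≤ 1) : Summable fun m => ‖coeff m (blaschkeProduct s v)‖ ^ 2 :=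
  summable_of_sum_range_le (fun _ => sq_nonneg _)
    (sum_range_norm_sq_coeff_blaschkeProduct_le_one hv)

lemma tsum_norm_coeff_blaschkeProduct_sq_le_one {ι : Type*} {s : Finset ι} {v : ι → ℂ}
    (hv : ∀ i ∈ s, ‖v i‖ ≤ 1) : ∑' m, ‖coeff m (blaschkeProduct s v)‖ ^ 2 ≤ 1 :=
  Real.tsum_le_of_sum_range_le (fun _ => sq_nonneg _)
    (sum_range_norm_sq_coeff_blaschkeProduct_le_one hv)

lemma norm_coeff_zero_blaschkeProduct {ι : Type*} (s : Finset ι) (v : ι → ℂ) :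
    ‖coeff 0 (blaschkeProduct s v)‖ = ∏ i ∈ s, ‖v i‖ := by
  simp [blaschkeProduct, blaschkeFactor, coeff_zero_eq_constantCoeff_apply, map_prod]

lemma tsum_coeff_mul_mul_pow {R : Type*} [NormedCommRing R] [CompleteSpace R] {φ ψ : R⟦X⟧} {z : R}
    (hφ : Summable fun m => ‖coeff m φ * z ^ m‖) (hψ : Summable fun m => ‖coeff m ψ * z ^ m‖) :
    ∑' m, coeff m (φ * ψ) * z ^ m = (∑' m, coeff m φ * z ^ m) * ∑' m, coeff m ψ * z ^ m := by
  rw [tsum_mul_tsum_eq_tsum_sum_antidiagonal_of_summable_norm hφ hψ]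
  refine tsum_congr fun m => ?_
  rw [coeff_mul, sum_mul]
  refine sum_congr rfl fun p hp => ?_
  rw [← mem_antidiagonal.mp hp, pow_add]
  ring

lemma summable_norm_coeff_mul_pow_of_norm_coeff_le {φ : ℂ⟦X⟧} {B : ℝ} (hφ : ∀ m, ‖coeff m φ‖ ≤ B)
    {z : ℂ} (hz : ‖z‖ < 1) : Summable fun m => ‖coeff m φ * z ^ m‖ := by
  refine ((summable_geometric_of_lt_one (norm_nonneg z) hz).mul_left B).of_nonneg_of_le
    (fun _ => norm_nonneg _) fun m => ?_
  rw [norm_mul, norm_pow]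
  exact mul_le_mul_of_nonneg_right (hφ m) (by positivity)

lemma coeff_X_sub_C_of_one_lt {R : Type*} [Ring R] (v : R) {m : ℕ} (hm : 1 < m) :
    coeff m (X - C v) = 0 := by
  simp [coeff_X, coeff_C, show m ≠ 0 by omega, show m ≠ 1 by omega]

lemma tsum_coeff_X_sub_C_mul_pow {R : Type*} [NormedCommRing R] (v z : R) :
    ∑' m, coeff m (X - C v) * z ^ m = z - v := by
  rw [tsum_eq_sum (s := range 2) fun m hm => by
    rw [coeff_X_sub_C_of_one_lt v (by simpa using hm), zero_mul]]
  simp only [map_sub, coeff_X, coeff_C, sum_range_succ, range_one, sum_singleton, zero_ne_one,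
    one_ne_zero, if_true, if_false, zero_sub, sub_zero, pow_zero, pow_one, mul_one, one_mul]
  abel

lemma tsum_coeff_blaschkeFactor_mul_pow_self {v : ℂ} (hv : ‖v‖ < 1) :
    ∑' m, coeff m (blaschkeFactor v) * v ^ m = 0 := by
  rw [blaschkeFactor, tsum_coeff_mul_mul_pow, tsum_coeff_X_sub_C_mul_pow, sub_self, zero_mul]
  · exact summable_of_ne_finset_zero (s := range 2) fun m hm => by
      rw [coeff_X_sub_C_of_one_lt v (by simpa using hm), zero_mul, norm_zero]
  · exact summable_norm_coeff_mul_pow_of_norm_coeff_le (B := 1) (fun m => by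
      rw [coeff_mk, norm_pow, RCLike.norm_conj]; exact pow_le_one₀ (norm_nonneg v) hv.le) hv

lemma tsum_coeff_blaschkeProduct_mul_pow_eq_zero {ι : Type*} {s : Finset ι} {v : ι → ℂ}
    (hv : ∀ i ∈ s, ‖v i‖ < 1) {k : ι} (hk : k ∈ s) :
    ∑' m, coeff m (blaschkeProduct s v) * v k ^ m = 0 := by
  classical
  induction s using Finset.induction_on with
  | empty => simp at hk
  | insert i t hi ih =>
    have hvt : ∀ j ∈ t, ‖v j‖ < 1 := fun j hj => hv j (mem_insert_of_mem hj)
    have hvk : ‖v k‖ < 1 := hv k hk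
    rw [blaschkeProduct_insert hi, tsum_coeff_mul_mul_pow
      (summable_norm_coeff_mul_pow_of_norm_coeff_le
        (norm_coeff_blaschkeFactor_le_one (hv i (mem_insert_self i t)).le) hvk)
      (summable_norm_coeff_mul_pow_of_norm_coeff_le
        (norm_coeff_blaschkeProduct_le_one fun j hj => (hvt j hj).le) hvk)]
    rcases mem_insert.mp hk with rfl | hk
    · rw [tsum_coeff_blaschkeFactor_mul_pow_self hvk, zero_mul]
    · rw [ih hvt hk, mul_zero]

lemma tsum_mul_le_sqrt_mul_sqrt {ι : Type*} {f g : ι → ℝ} (hf0 : ∀ i, 0 ≤ f i)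
    (hg0 : ∀ i, 0 ≤ g i) (hf : Summable fun i => f i ^ 2) (hg : Summable fun i => g i ^ 2) :
    ∑' i, f i * g i ≤ √(∑' i, f i ^ 2) * √(∑' i, g i ^ 2) := by
  have h := Real.inner_le_Lp_mul_Lq_tsum_of_nonneg Real.HolderConjugate.two_two hf0 hg0
    (by simpa [Real.rpow_two] using hf) (by simpa [Real.rpow_two] using hg)
  simpa only [Real.rpow_two, ← Real.sqrt_eq_rpow] using h

lemma summable_norm_sq_of_summable_norm {ι E : Type*} [SeminormedAddCommGroup E] {f : ι → E}
    (hf : Summable fun i => ‖f i‖) : Summable fun i => ‖f i‖ ^ 2 := by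
  refine hf.of_norm_bounded_eventually ?_
  filter_upwards [hf.tendsto_cofinite_zero.eventually_lt_const zero_lt_one] with i hi
  rw [Real.norm_of_nonneg (sq_nonneg _), sq]
  exact mul_le_of_le_one_left (norm_nonneg _) hi.le

lemma summable_norm_ite_sub_sum_mul_pow {ι : Type*} [Fintype ι] (w b : ι → ℂ)
    (hw : ∀ j, ‖w j‖ < 1) :
    Summable fun m : ℕ => ‖(if m = 0 then 1 else 0) - ∑ j, b j * w j ^ m‖ :=
  summable_norm_iff.mpr <| (summable_of_ne_finset_zero (s := {0}) fun m hm => by simp_all).sub <|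
    summable_sum fun j _ => (summable_geometric_of_norm_lt_one (hw j)).mul_left (b j)

lemma tsum_coeff_mul_ite_sub_sum_mul_pow {ι : Type*} [Fintype ι] {φ : ℂ⟦X⟧} {B : ℝ}
    (hφ : ∀ m, ‖coeff m φ‖ ≤ B) {w : ι → ℂ} (hw : ∀ j, ‖w j‖ < 1)
    (hroot : ∀ j, ∑' m, coeff m φ * w j ^ m = 0) (b : ι → ℂ) :
    ∑' m, coeff m φ * ((if m = 0 then 1 else 0) - ∑ j, b j * w j ^ m) = coeff 0 φ := by
  have hφw : ∀ j, Summable fun m => b j * (coeff m φ * w j ^ m) := fun j =>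
    (summable_norm_coeff_mul_pow_of_norm_coeff_le hφ (hw j)).of_norm.mul_left (b j)
  simp only [mul_sub, mul_ite, mul_one, mul_zero, mul_sum, mul_left_comm (coeff _ φ) (b _)]
  rw [Summable.tsum_sub (summable_of_ne_finset_zero (s := {0}) fun m hm => by simp_all)
    (summable_sum fun j _ => hφw j), tsum_ite_eq, Summable.tsum_finsetSum fun j _ => hφw j]
  simp [tsum_mul_left, hroot]

theorem prod_norm_sq_le_tsum_norm_ite_sub_sum_mul_pow_sq {ι : Type*} [Fintype ι] (w b : ι → ℂ)
    (hw : ∀ j, ‖w j‖ < 1) :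
    ∏ j, ‖w j‖ ^ 2 ≤ ∑' m : ℕ, ‖(if m = 0 then 1 else 0) - ∑ j, b j * w j ^ m‖ ^ 2 := by
  set u : ℕ → ℂ := fun m => coeff m (blaschkeProduct univ w)
  set s : ℕ → ℂ := fun m => (if m = 0 then 1 else 0) - ∑ j, b j * w j ^ m
  have hw' : ∀ j ∈ univ, ‖w j‖ ≤ 1 := fun j _ => (hw j).le
  have hu : ∀ m, ‖u m‖ ≤ 1 := norm_coeff_blaschkeProduct_le_one hw'
  have hs : Summable fun m => ‖s m‖ := summable_norm_ite_sub_sum_mul_pow w b hw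
  have hpair : ∑' m, u m * s m = u 0 := tsum_coeff_mul_ite_sub_sum_mul_pow hu hw
    (fun j => tsum_coeff_blaschkeProduct_mul_pow_eq_zero (fun i _ => hw i) (mem_univ j)) b
  have hus : Summable fun m => ‖u m * s m‖ :=
    hs.of_nonneg_of_le (fun _ => norm_nonneg _) fun m => by
      rw [norm_mul]; exact mul_le_of_le_one_left (norm_nonneg _) (hu m)
  calc ∏ j, ‖w j‖ ^ 2 = ‖u 0‖ ^ 2 := by rw [prod_pow, norm_coeff_zero_blaschkeProduct]
    _ ≤ (∑' m, ‖u m‖ * ‖s m‖) ^ 2 := by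
        rw [← hpair]
        gcongr
        exact (norm_tsum_le_tsum_norm hus).trans_eq (tsum_congr fun m => norm_mul _ _)
    _ ≤ (√(∑' m, ‖u m‖ ^ 2) * √(∑' m, ‖s m‖ ^ 2)) ^ 2 := by
        refine pow_le_pow_left₀ (tsum_nonneg fun m => by positivity) ?_ 2
        exact tsum_mul_le_sqrt_mul_sqrt (fun _ => norm_nonneg _) (fun _ => norm_nonneg _)
          (summable_norm_coeff_blaschkeProduct_sq hw') (summable_norm_sq_of_summable_norm hs)
    _ ≤ ∑' m, ‖s m‖ ^ 2 := by
        rw [mul_pow, Real.sq_sqrt (tsum_nonneg fun _ => sq_nonneg _),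
          Real.sq_sqrt (tsum_nonneg fun _ => sq_nonneg _)]
        exact mul_le_of_le_one_left (tsum_nonneg fun _ => sq_nonneg _)
          (tsum_norm_coeff_blaschkeProduct_sq_le_one hw')

noncomputable def expSum {n : ℕ} (x : Fin n → ℝ) (a : Fin n → ℂ) (k : ℤ) : ℂ :=
  ∑ j, a j * cexp (-(2 * π * I * k * x j))

lemma norm_exp_neg_two_pi_I_mul (k : ℤ) (y : ℝ) : ‖cexp (-(2 * π * I * k * y))‖ = 1 := by
  rw [Complex.norm_exp]
  simp

lemma norm_expSum_le {n : ℕ} (x : Fin n → ℝ) (a : Fin n → ℂ) (k : ℤ) :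
    ‖expSum x a k‖ ≤ ∑ j, ‖a j‖ :=
  (norm_sum_le _ _).trans_eq <| sum_congr rfl fun j _ => by
    rw [norm_mul, norm_exp_neg_two_pi_I_mul, mul_one]

lemma exp_two_pi_I_mul_sub_eq (k : ℤ) (y z : ℝ) :
    cexp (2 * π * I * ((k * (y - z) : ℝ) : ℂ)) =
      conj (cexp (-(2 * π * I * k * y))) * cexp (-(2 * π * I * k * z)) := by
  rw [← Complex.exp_conj, ← Complex.exp_add]
  congr 1
  simp only [map_neg, map_mul, Complex.conj_ofReal, Complex.conj_I, map_ofNat, map_intCast]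
  push_cast
  ring

lemma sum_sum_conj_mul_mul_Klam1 {n : ℕ} {lam : ℤ → ℝ} (hs : Summable lam) (x : Fin n → ℝ)
    (a : Fin n → ℂ) :
    ∑ j, ∑ l, conj (a j) * a l * Klam1 lam (x j) (x l) =
      ∑' k, ((lam k * ‖expSum x a k‖ ^ 2 : ℝ) : ℂ) := by
  set e : ℤ → Fin n → ℂ := fun k j => cexp (-(2 * π * I * k * x j))
  set f : Fin n → Fin n → ℤ → ℂ := fun j l k => lam k * (conj (a j * e k j) * (a l * e k l))
  have hf : ∀ j l, Summable (f j l) := fun j l =>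
    Summable.of_norm_bounded (hs.abs.mul_right (‖a j‖ * ‖a l‖)) fun k => le_of_eq <| by
      simp only [f, e, norm_mul, RCLike.norm_conj, Complex.norm_real, Real.norm_eq_abs,
        norm_exp_neg_two_pi_I_mul, mul_one]
  calc ∑ j, ∑ l, conj (a j) * a l * Klam1 lam (x j) (x l)
      = ∑ j, ∑ l, ∑' k, f j l k := by
        refine sum_congr rfl fun j _ => sum_congr rfl fun l _ => ?_
        rw [Klam1, ← tsum_mul_left]
        refine tsum_congr fun k => ?_
        simp only [f, e, exp_two_pi_I_mul_sub_eq, map_mul]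
        ring
    _ = ∑' k, ∑ j, ∑ l, f j l k := by
        rw [Summable.tsum_finsetSum fun j _ => summable_sum fun l _ => hf j l]
        exact sum_congr rfl fun j _ => (Summable.tsum_finsetSum fun l _ => hf j l).symm
    _ = ∑' k, ((lam k * ‖expSum x a k‖ ^ 2 : ℝ) : ℂ) := by
        refine tsum_congr fun k => ?_
        rw [Complex.ofReal_mul, Complex.ofReal_pow, ← Complex.mul_conj', mul_comm (expSum x a k),
          expSum, map_sum, sum_mul_sum, mul_sum]
        simp only [f, e, mul_sum]

lemma norm_ite_sub_sq (k : ℤ) (z : ℂ) :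
    ‖(if k = 0 then 1 else 0) - z‖ ^ 2 = ‖z‖ ^ 2 + if k = 0 then 1 - 2 * z.re else 0 := by
  split_ifs
  · simp only [Complex.sq_norm, Complex.normSq_apply, Complex.sub_re, Complex.sub_im,
      Complex.one_re, Complex.one_im]
    ring
  · simp

lemma hasSum_quadErr2₁ {n : ℕ} {lam : ℤ → ℝ} (hs : Summable lam) (x : Fin n → ℝ)
    (a : Fin n → ℂ) :
    HasSum (fun k => lam k * ‖(if k = 0 then 1 else 0) - expSum x a k‖ ^ 2)
      (quadErr2₁ lam x a) := by
  have hsum : Summable fun k => lam k * ‖expSum x a k‖ ^ 2 :=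
    Summable.of_norm_bounded (hs.abs.mul_right ((∑ j, ‖a j‖) ^ 2)) fun k => by
      rw [norm_mul, Real.norm_eq_abs, norm_pow, norm_norm]
      exact mul_le_mul_of_nonneg_left (pow_le_pow_left₀ (norm_nonneg _) (norm_expSum_le x a k) 2)
        (abs_nonneg _)
  have hfin : Summable fun k : ℤ => if k = 0 then lam k * (1 - 2 * (expSum x a k).re) else 0 :=
    summable_of_ne_finset_zero (s := {0}) fun k hk => by simp_all
  convert (hsum.add hfin).hasSum using 1
  · simp only [norm_ite_sub_sq, mul_add, mul_ite, mul_zero]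
  · rw [hsum.tsum_add hfin, tsum_ite_eq, quadErr2₁, sum_sum_conj_mul_mul_Klam1 hs,
      ← Complex.ofReal_tsum, Complex.ofReal_re, show expSum x a 0 = ∑ j, a j by simp [expSum]]
    ring

lemma half_min_le_pow {μ : ℝ} (hμ0 : 0 ≤ μ) (hμ1 : μ < 1) (n : ℕ) :
    1 / 2 * min 1 (μ ^ (4 * n) / (4 * n * (1 - μ))) ≤ μ ^ n := by
  rcases le_or_gt (1 / 2) (μ ^ n) with h | h
  · nlinarith [min_le_left 1 (μ ^ (4 * n) / (4 * n * (1 - μ)))]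
  · have hbern : 1 - n * (1 - μ) ≤ μ ^ n := by
      have h := one_add_mul_le_pow (a := μ - 1) (by linarith) n
      rw [add_sub_cancel] at h
      linarith
    have hden : 1 ≤ 4 * n * (1 - μ) := by linarith
    have hfrac : μ ^ (4 * n) / (4 * n * (1 - μ)) ≤ μ ^ n :=
      (div_le_self (by positivity) hden).trans (pow_le_pow_of_le_one hμ0 hμ1.le (by omega))
    nlinarith [min_le_right 1 (μ ^ (4 * n) / (4 * n * (1 - μ))), pow_nonneg hμ0 n]


lemma norm_ite_sub_sum_mul_pow_sq_eq {n : ℕ} {r : ℝ} (hr : 0 ≤ r) (x : Fin n → ℝ)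
    (a : Fin n → ℂ) (m : ℕ) :
    ‖(if m = 0 then 1 else 0) - ∑ j, a j * ((r : ℂ) * cexp (-(2 * π * I * x j))) ^ m‖ ^ 2 =
      (r ^ 2) ^ m * ‖(if (m : ℤ) = 0 then 1 else 0) - expSum x a m‖ ^ 2 := by
  have hsum :
      ∑ j, a j * ((r : ℂ) * cexp (-(2 * π * I * x j))) ^ m = (r : ℂ) ^ m * expSum x a m := by
    simp only [expSum, mul_pow, ← Complex.exp_nat_mul, mul_sum]
    refine sum_congr rfl fun j _ => ?_
    push_cast
    ring_nf
  have hδ : (if m = 0 then 1 else 0 : ℂ) = (r : ℂ) ^ m * if (m : ℤ) = 0 then 1 else 0 := by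
    split_ifs <;> simp_all
  rw [hsum, hδ, ← mul_sub, norm_mul, mul_pow, norm_pow, Complex.norm_real,
    Real.norm_of_nonneg hr, ← pow_mul, ← pow_mul, mul_comm m]

lemma mul_pow_le_quadErr2₁ {n : ℕ} {lam : ℤ → ℝ} (hs : Summable lam) {c μ : ℝ} (hc : 0 ≤ c)
    (hμ0 : 0 ≤ μ) (hμ1 : μ < 1) (hlow : ∀ k : ℤ, c * μ ^ k.natAbs ≤ lam k) (x : Fin n → ℝ)
    (a : Fin n → ℂ) : c * μ ^ n ≤ quadErr2₁ lam x a := by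
  set e : ℤ → ℂ := fun k => (if k = 0 then 1 else 0) - expSum x a k
  set w : Fin n → ℂ := fun j => (√μ : ℂ) * cexp (-(2 * π * I * x j))
  have hF := hasSum_quadErr2₁ hs x a
  have hlam : ∀ k, 0 ≤ lam k := fun k => (mul_nonneg hc (pow_nonneg hμ0 _)).trans (hlow k)
  have hsq : √μ ^ 2 = μ := Real.sq_sqrt hμ0
  have hw : ∀ j, ‖w j‖ = √μ := fun j => by
    have h := norm_exp_neg_two_pi_I_mul 1 (x j)
    rw [Int.cast_one, mul_one] at h
    rw [norm_mul, h, mul_one, Complex.norm_real, Real.norm_of_nonneg (Real.sqrt_nonneg _)]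
  have hsumℕ : Summable fun m : ℕ => lam m * ‖e m‖ ^ 2 :=
    hF.summable.comp_injective Nat.cast_injective
  have hwe : ∀ m : ℕ, ‖(if m = 0 then 1 else 0) - ∑ j, a j * w j ^ m‖ ^ 2 = μ ^ m * ‖e m‖ ^ 2 :=
    fun m => (norm_ite_sub_sum_mul_pow_sq_eq (Real.sqrt_nonneg μ) x a m).trans (by rw [hsq])
  have hle : ∀ m : ℕ, c * μ ^ m * ‖e m‖ ^ 2 ≤ lam m * ‖e m‖ ^ 2 := fun m =>
    mul_le_mul_of_nonneg_right (by simpa using hlow m) (sq_nonneg _)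
  calc c * μ ^ n = c * ∏ j, ‖w j‖ ^ 2 := by simp [hw, hsq]
    _ ≤ c * ∑' m : ℕ, ‖(if m = 0 then 1 else 0) - ∑ j, a j * w j ^ m‖ ^ 2 := by
        gcongr
        refine prod_norm_sq_le_tsum_norm_ite_sub_sum_mul_pow_sq w a fun j => ?_
        rw [hw]
        exact (Real.sqrt_lt_sqrt hμ0 hμ1).trans_eq Real.sqrt_one
    _ = ∑' m : ℕ, c * μ ^ m * ‖e m‖ ^ 2 := by
        simp only [hwe, mul_assoc, tsum_mul_left]
    _ ≤ ∑' m : ℕ, lam m * ‖e m‖ ^ 2 :=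
        Summable.tsum_le_tsum hle (hsumℕ.of_nonneg_of_le (fun m => by positivity) hle) hsumℕ
    _ ≤ ∑' k : ℤ, lam k * ‖e k‖ ^ 2 :=
        tsum_comp_le_tsum_of_inj hF.summable (fun k => mul_nonneg (hlam k) (sq_nonneg _))
          Nat.cast_injective
    _ = quadErr2₁ lam x a := hF.tsum_eq

theorem en2_lower_bound_analytic_general (lam : ℤ → ℝ) (hs : Summable lam)
    (c ω : ℝ) (hc : 0 < c) (hω : 1 < ω)
    (hlow : ∀ k : ℤ, c * ω ^ (-(k.natAbs : ℤ)) ≤ lam k)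
    (n : ℕ) :
    c / 2 * min 1 (ω ^ (-(4 * n : ℤ)) / (4 * n * (1 - ω⁻¹))) ≤ en2₁ lam n := by
  have hinv : ∀ m : ℕ, ω ^ (-(m : ℤ)) = ω⁻¹ ^ m := fun m => by
    rw [zpow_neg, zpow_natCast, inv_pow]
  have hμ0 : 0 ≤ ω⁻¹ := inv_nonneg.mpr (by linarith)
  have hμ1 : ω⁻¹ < 1 := inv_lt_one_of_one_lt₀ hω
  calc c / 2 * min 1 (ω ^ (-(4 * n : ℤ)) / (4 * n * (1 - ω⁻¹)))
      = c * (1 / 2 * min 1 (ω⁻¹ ^ (4 * n) / (4 * n * (1 - ω⁻¹)))) := by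
        rw [← hinv]; push_cast; ring
    _ ≤ c * ω⁻¹ ^ n := mul_le_mul_of_nonneg_left (half_min_le_pow hμ0 hμ1 n) hc.le
    _ ≤ en2₁ lam n := le_ciInf fun x => le_ciInf fun a =>
        mul_pow_le_quadErr2₁ hs hc.le hμ0 hμ1 (fun k => hinv k.natAbs ▸ hlow k) x a

/-- For `λ_k ≥ c ω^{-|k|}` with `c > 0`, `ω > 1`,
`e_n(H_λ)² ≥ (c/2) min{1, ω^{-4n}/(4n(1-ω⁻¹))}`. -/
theorem en2_lower_bound_analytic (lam : ℤ → ℝ) (hlam : ∀ k, 0 ≤ lam k) (hs : Summable lam)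
    (c ω : ℝ) (hc : 0 < c) (hω : 1 < ω)
    (hlow : ∀ k : ℤ, c * ω ^ (-(k.natAbs : ℤ)) ≤ lam k)
    (n : ℕ) (hn : 1 ≤ n) :
    c / 2 * min 1 (ω ^ (-(4 * n : ℤ)) / (4 * n * (1 - ω⁻¹))) ≤ en2₁ lam n :=
  en2_lower_bound_analytic_general lam hs c ω hc hω hlow n
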